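/- Let v ∈ ℂ be nonzero and u ∈ ℂ satisfy |u| ≤ (sin θ)|v| for some 0 ≤ θ < π/2. Then v + u ≠ 0 and the angle between v and v + u, considered as vectors in ℝ² = ℂ, does not exceed θ. -/

import Mathlib

/-!
Write `r = ‖x‖`, `a = ⟪x, y⟫` and `s = sin θ`, `c = cos θ`. Then `⟪x, x + y⟫ = r² + a` and
`‖x + y‖² = r² + 2a + ‖y‖²`, and the identity
`(r² + a)² - c² r² ‖x + y‖² = (s² r² + a)² + c² r² (s² r² - ‖y‖²)`
shows `c ‖x‖ ‖x + y‖ ≤ ⟪x, x + y⟫`, i.e. `cos θ ≤ cos ∠(x, x + y)`.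
-/

/-- The angle between two complex numbers viewed as vectors in ℝ² = ℂ. -/
noncomputable def cangle (u v : ℂ) : ℝ :=
  Real.arccos ((u * starRingEnd ℂ v).re / (‖u‖ * ‖v‖))

open Real InnerProductGeometry
open scoped RealInnerProductSpace

theorem cangle_eq_angle (u v : ℂ) : cangle u v = angle u v := by
  rw [angle_comm, angle, Complex.inner, mul_comm ‖v‖]
  rfl

section RealInnerProductSpace

variable {V : Type*} [NormedAddCommGroup V] [InnerProductSpace ℝ V]

theorem cos_mul_norm_mul_norm_add_le_inner {x y : V} {θ : ℝ} (hy : ‖y‖ ≤ sin θ * ‖x‖) :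
    cos θ * (‖x‖ * ‖x + y‖) ≤ ⟪x, x + y⟫ := by
  set r := ‖x‖
  set a := ⟪x, y⟫
  have hinner : ⟪x, x + y⟫ = r ^ 2 + a := by
    rw [inner_add_right, real_inner_self_eq_norm_sq]
  have hnorm : ‖x + y‖ ^ 2 = r ^ 2 + 2 * a + ‖y‖ ^ 2 := norm_add_sq_real x y
  have hy_sq : ‖y‖ ^ 2 ≤ (sin θ * r) ^ 2 := pow_le_pow_left₀ (norm_nonneg y) hy 2
  have ha : |a| ≤ r * ‖y‖ := abs_real_inner_le_norm x y
  have hpos : 0 ≤ r ^ 2 + a := by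
    have : r * ‖y‖ ≤ r ^ 2 := by
      nlinarith [sin_le_one θ, norm_nonneg x, norm_nonneg y]
    linarith [neg_abs_le a]
  rw [hinner]
  refine le_of_sq_le_sq ?_ hpos
  have hcs := sin_sq_add_cos_sq θ
  calc (cos θ * (r * ‖x + y‖)) ^ 2 = cos θ ^ 2 * r ^ 2 * (r ^ 2 + 2 * a + ‖y‖ ^ 2) := by
        rw [← hnorm]; ring
    _ ≤ (sin θ ^ 2 * r ^ 2 + a) ^ 2 + cos θ ^ 2 * r ^ 2 * ((sin θ * r) ^ 2 - ‖y‖ ^ 2)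
          + cos θ ^ 2 * r ^ 2 * (r ^ 2 + 2 * a + ‖y‖ ^ 2) := by
        refine le_add_of_nonneg_left (add_nonneg (sq_nonneg _) ?_)
        exact mul_nonneg (by positivity) (sub_nonneg.mpr hy_sq)
    _ = (r ^ 2 + a) ^ 2 := by
        linear_combination (r ^ 4 * (sin θ ^ 2 + 1) + 2 * a * r ^ 2) * hcs

theorem angle_add_le_of_norm_le_sin_mul {x y : V} {θ : ℝ} (hθ0 : 0 ≤ θ) (hθπ : θ ≤ π)
    (hx : x ≠ 0) (hxy : x + y ≠ 0) (hy : ‖y‖ ≤ sin θ * ‖x‖) : angle x (x + y) ≤ θ := by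
  have hcos : cos θ ≤ ⟪x, x + y⟫ / (‖x‖ * ‖x + y‖) :=
    (le_div_iff₀ (by positivity)).mpr (cos_mul_norm_mul_norm_add_le_inner hy)
  calc angle x (x + y) ≤ arccos (cos θ) := arccos_le_arccos hcos
    _ = θ := arccos_cos hθ0 hθπ

end RealInnerProductSpace

theorem stmt_1 (v u : ℂ) (hv : v ≠ 0) (θ : ℝ) (hθ0 : 0 ≤ θ) (hθ : θ < Real.pi / 2)
    (hu : ‖u‖ ≤ Real.sin θ * ‖v‖) :
    v + u ≠ 0 ∧ cangle v (v + u) ≤ θ := by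
  have hsin : sin θ < 1 := by
    simpa using sin_lt_sin_of_lt_of_le_pi_div_two (by linarith [pi_pos]) le_rfl hθ
  have hnorm : ‖u‖ < ‖v‖ := hu.trans_lt (mul_lt_of_lt_one_left (norm_pos_iff.mpr hv) hsin)
  have hvu : v + u ≠ 0 := fun h => by
    rw [eq_neg_of_add_eq_zero_right h, norm_neg] at hnorm
    exact lt_irrefl _ hnorm
  refine ⟨hvu, ?_⟩
  rw [cangle_eq_angle]
  exact angle_add_le_of_norm_le_sin_mul hθ0 (by linarith [pi_pos]) hv hvu hu
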